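/- arXiv:1609.02726 — 2 statements merged into one kernel-verified Lean document; each statement's English description precedes it below -/
import Mathlib

section
/- Let G be a finite simple graph with n vertices and X a proper coloring of G using |X| nonempty colors. Then the chromatic strength of G satisfies s(G) ≤ max(⌈(1 + √(1 + 8(Σ(X) − n)))/2⌉ − 1, |X|). In particular, every proper coloring of G using k colors with k(k−1)/2 + n ≥ Σ(X) and k > |X| has weighted sum at least Σ(X), so some optimal sum coloring uses at most max(⌈(1 + √(1 + 8(Σ(X) − n)))/2⌉ − 1, |X|) colors. -/
/-!
If `c` is a proper coloring with `k` distinct (positive) colors, then the values `c v - 1`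
take `k` distinct natural values, so `∑ v, c v ≥ n + (0 + 1 + ⋯ + (k - 1)) = n + k(k-1)/2`;
this is the second claim.

Replacing each color by its rank among the colors used keeps the coloring proper, does not
increase the sum, and uses colors `≤ k`. Hence any optimal coloring with `k` colors witnesses
`s(G) ≤ k`. If `X` is optimal this gives `s(G) ≤ |X|`. Otherwise an optimal coloring with `k`
colors has `n + k(k-1)/2 ≤ Σ(G) < Σ(X)`, and solving this quadratic inequality for `k` gives
`k ≤ ⌈(1 + √(1 + 8(Σ(X) − n)))/2⌉ − 1`.
-/

/-- A proper coloring of `G` with positive natural-number colors. -/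
def IsProperColoring {V : Type*} (G : SimpleGraph V) (c : V → ℕ) : Prop :=
  (∀ u v, G.Adj u v → c u ≠ c v) ∧ ∀ v, 1 ≤ c v

/-- The chromatic sum `Σ(G)`. -/
noncomputable def chromaticSum {V : Type*} [Fintype V] (G : SimpleGraph V) : ℕ :=
  sInf { s | ∃ c : V → ℕ, IsProperColoring G c ∧ s = ∑ v, c v }

/-- The chromatic strength `s(G)`. -/
noncomputable def strength {V : Type*} [Fintype V] (G : SimpleGraph V) : ℕ :=
  sInf { k | ∃ c : V → ℕ, IsProperColoring G c ∧ (∀ v, c v ≤ k) ∧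
    ∑ v, c v = chromaticSum G }

/-- The number of (nonempty) colors used by a coloring. -/
def numColors {V : Type*} [Fintype V] [DecidableEq V] (c : V → ℕ) : ℕ :=
  (Finset.univ.image c).card

section

open Finset

theorem sum_range_card_le_sum (s : Finset ℕ) : ∑ i ∈ range #s, i ≤ ∑ i ∈ s, i := by
  induction s using Finset.induction_on_max with
  | empty => simp
  | insert a s hlt ih =>
    have hcard : #s ≤ a := by
      simpa using card_le_card fun i hi => mem_range.2 (hlt i hi)
    rw [card_insert_of_notMem fun h => (hlt a h).false, sum_range_succ,
      sum_insert fun h => (hlt a h).false]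
    omega

theorem le_ceil_sub_one_of_mul_sub_one_div_two_lt {k D : ℕ} (h : k * (k - 1) / 2 < D) :
    k ≤ ⌈(1 + √(1 + 8 * D)) / 2⌉₊ - 1 := by
  have hnat : k * k < 2 * D + k := by
    have := Nat.le_mul_self k
    rw [Nat.mul_sub_one] at h
    omega
  have hsq : (k : ℝ) ^ 2 < 2 * D + k := by
    rw [sq]; exact_mod_cast hnat
  have hroot : 2 * (k : ℝ) - 1 < √(1 + 8 * D) := Real.lt_sqrt_of_sq_lt (by nlinarith)
  have : k < ⌈(1 + √(1 + 8 * D)) / 2⌉₊ := Nat.lt_ceil.2 (by linarith)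
  omega

variable {V : Type*} [Fintype V] {G : SimpleGraph V} {c : V → ℕ}

theorem chromaticSum_le (hc : IsProperColoring G c) : chromaticSum G ≤ ∑ v, c v :=
  Nat.sInf_le ⟨c, hc, rfl⟩

theorem exists_isProperColoring_sum_eq_chromaticSum (G : SimpleGraph V) :
    ∃ c : V → ℕ, IsProperColoring G c ∧ ∑ v, c v = chromaticSum G := by
  have hinj : IsProperColoring G fun v => (Fintype.equivFin V v : ℕ) + 1 :=
    ⟨fun u v huv h => huv.ne ((Fintype.equivFin V).injective (Fin.ext (by simpa using h))),
      fun _ => Nat.le_add_left _ _⟩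
  obtain ⟨c, hc, hsum⟩ := Nat.sInf_mem
    (⟨_, _, hinj, rfl⟩ : {s | ∃ c : V → ℕ, IsProperColoring G c ∧ s = ∑ v, c v}.Nonempty)
  exact ⟨c, hc, hsum.symm⟩

def rankColoring (c : V → ℕ) (v : V) : ℕ := #{i ∈ univ.image c | i ≤ c v}

theorem rankColoring_lt_rankColoring {u v : V} (h : c u < c v) :
    rankColoring c u < rankColoring c v := by
  refine card_lt_card ⟨monotone_filter_right _ fun _ _ hi => hi.trans h.le,
    fun hsub => ?_⟩
  exact h.not_ge (mem_filter.1 (hsub (mem_filter.2 ⟨mem_image_of_mem c (mem_univ v), le_rfl⟩))).2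

theorem rankColoring_le (hc : ∀ v, 1 ≤ c v) (v : V) : rankColoring c v ≤ c v := by
  have hsub : {i ∈ univ.image c | i ≤ c v} ⊆ Icc 1 (c v) := fun i hi => by
    obtain ⟨hi, hle⟩ := mem_filter.1 hi
    obtain ⟨w, -, rfl⟩ := mem_image.1 hi
    exact mem_Icc.2 ⟨hc w, hle⟩
  simpa [rankColoring] using card_le_card hsub

theorem IsProperColoring.rankColoring (hc : IsProperColoring G c) :
    IsProperColoring G (rankColoring c) := by
  refine ⟨fun u v huv => ?_, fun v => card_pos.2 ⟨c v, by simp⟩⟩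
  rcases (hc.1 u v huv).lt_or_gt with h | h
  · exact (rankColoring_lt_rankColoring h).ne
  · exact (rankColoring_lt_rankColoring h).ne'

variable [DecidableEq V]

theorem numColors_mul_sub_one_div_two_add_card_le_sum (hc : ∀ v, 1 ≤ c v) :
    numColors c * (numColors c - 1) / 2 + Fintype.card V ≤ ∑ v, c v := by
  have hcard : #(univ.image fun v => c v - 1) = numColors c := by
    rw [numColors, show univ.image (fun v => c v - 1) = (univ.image c).image (· - 1) by
      rw [image_image]; rfl]
    refine card_image_of_injOn fun i hi j hj hij => ?_
    obtain ⟨u, -, rfl⟩ := mem_image.1 hi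
    obtain ⟨v, -, rfl⟩ := mem_image.1 hj
    have := hc u; have := hc v; omega
  have hshift : ∑ v, (c v - 1) + Fintype.card V = ∑ v, c v := by
    rw [Fintype.card_eq_sum_ones, ← sum_add_distrib]
    exact sum_congr rfl fun v _ => Nat.sub_add_cancel (hc v)
  calc numColors c * (numColors c - 1) / 2 + Fintype.card V
      = ∑ i ∈ range #(univ.image fun v => c v - 1), i + Fintype.card V := by
        rw [hcard, sum_range_id]
    _ ≤ ∑ i ∈ univ.image (fun v => c v - 1), i + Fintype.card V := by
        grw [sum_range_card_le_sum]
    _ ≤ ∑ v, (c v - 1) + Fintype.card V := by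
        grw [sum_image_le_of_nonneg fun _ _ => Nat.zero_le _]
    _ = ∑ v, c v := hshift

theorem rankColoring_le_numColors (v : V) : rankColoring c v ≤ numColors c :=
  card_le_card (filter_subset _ _)

theorem strength_le_numColors (hc : IsProperColoring G c) (hopt : ∑ v, c v = chromaticSum G) :
    strength G ≤ numColors c :=
  Nat.sInf_le ⟨rankColoring c, hc.rankColoring, rankColoring_le_numColors,
    le_antisymm ((sum_le_sum fun v _ => rankColoring_le hc.2 v).trans hopt.le)
      (chromaticSum_le hc.rankColoring)⟩

end

/-- with `Σ(X) = ∑ v, c v` and `n = |V|`, the chromatic strength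
satisfies `s(G) ≤ max (⌈(1 + √(1 + 8(Σ(X) − n)))/2⌉ − 1) |X|`; moreover every
proper coloring using exactly `k` colors with `k(k−1)/2 + n ≥ Σ(X)` and
`k > |X|` has weighted sum at least `Σ(X)`. -/
theorem strength_stmt_8 {V : Type*} [Fintype V] [DecidableEq V]
    (G : SimpleGraph V) (c : V → ℕ) (hc : IsProperColoring G c) :
    strength G ≤
      max (⌈(1 + Real.sqrt (1 + 8 * ((∑ v, c v) - Fintype.card V : ℕ))) / 2⌉₊ - 1)
        (numColors c) ∧
    ∀ (c' : V → ℕ), IsProperColoring G c' →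
      ∀ k : ℕ, numColors c' = k → (∑ v, c v) ≤ k * (k - 1) / 2 + Fintype.card V →
        numColors c < k → (∑ v, c v) ≤ ∑ v, c' v := by
  refine ⟨?_, fun c' hc' k hk hsum _ =>
    hsum.trans (hk ▸ numColors_mul_sub_one_div_two_add_card_le_sum hc'.2)⟩
  rcases (chromaticSum_le hc).eq_or_lt with hopt | hlt
  · exact le_max_of_le_right (strength_le_numColors hc hopt.symm)
  · obtain ⟨c₀, hc₀, hopt⟩ := exists_isProperColoring_sum_eq_chromaticSum G
    have hbound := numColors_mul_sub_one_div_two_add_card_le_sum hc₀.2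
    refine le_max_of_le_left ((strength_le_numColors hc₀ hopt).trans ?_)
    exact le_ceil_sub_one_of_mul_sub_one_div_two_lt (by omega)
end

section
/- Let n, k, k' be integers with 1 ≤ k < k' ≤ n, let p be a major motif of n with k parts, and let q be any motif of n with at least k' parts such that q[1] ≤ p[1]. Then p dominates q. -/
/-- A motif of `n`: a non-increasing sequence (list) of positive integers summing to `n`. -/
def IsMotif (n : ℕ) (p : List ℕ) : Prop :=
  p.Pairwise (· ≥ ·) ∧ (∀ x ∈ p, 0 < x) ∧ p.sum = n

/-- `p` dominates `q`. -/
def Dominates (p q : List ℕ) : Prop :=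
  ∀ t, 1 ≤ t → t ≤ min p.length q.length → (q.take t).sum ≤ (p.take t).sum

/-- The major motif of `n` with `k` parts and first entry `lam`:
`β = ⌊(n−k)/(lam−1)⌋` copies of `lam`, then `n − β·lam − (k−β−1)`,
then `k − β − 1` ones. -/
def majorMotif (n k lam : ℕ) : List ℕ :=
  List.replicate ((n - k) / (lam - 1)) lam ++
    (n - ((n - k) / (lam - 1)) * lam - (k - (n - k) / (lam - 1) - 1)) ::
      List.replicate (k - (n - k) / (lam - 1) - 1) 1

/-- `p` is a major motif of `n` with `k` parts: for some admissible first
entry `lam` (with `1 < lam` and `⌈n/k⌉ ≤ lam ≤ n − k + 1`), `p = majorMotif n k lam`. -/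
def IsMajorMotif (n k : ℕ) (p : List ℕ) : Prop :=
  ∃ lam : ℕ, 1 < lam ∧ (n + k - 1) / k ≤ lam ∧ lam ≤ n - k + 1 ∧
    p = majorMotif n k lam

/-!
Up to the number `β` of leading copies of `λ = p[1]`, the prefix sums of `p` are `tλ`, and
those of `q` are at most `t·q[1] ≤ tλ`. Past `β`, the tail of `p` consists of ones, so it is
no larger than the tail of `q`, which has at least as many positive parts; as both motifs
sum to `n`, the prefix of `p` is then the larger one.
-/

namespace List

theorem le_headI_of_pairwise_ge {l : List ℕ} (hl : l.Pairwise (· ≥ ·)) {x : ℕ} (hx : x ∈ l) :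
    x ≤ l.headI := by
  cases l with
  | nil => simp at hx
  | cons a tl =>
    rcases mem_cons.1 hx with rfl | hx
    · exact le_rfl
    · exact (pairwise_cons.1 hl).1 x hx

theorem sum_take_le_mul_headI {l : List ℕ} (hl : l.Pairwise (· ≥ ·)) (t : ℕ) :
    (l.take t).sum ≤ t * l.headI := by
  calc (l.take t).sum ≤ (l.take t).length • l.headI :=
        sum_le_card_nsmul _ _ fun x hx => le_headI_of_pairwise_ge hl (mem_of_mem_take hx)
    _ ≤ t * l.headI := by
        rw [smul_eq_mul, length_take]
        exact Nat.mul_le_mul_right _ (min_le_left _ _)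

theorem sum_take_le_sum_take_of_sum_drop_le {l l' : List ℕ} (hsum : l.sum = l'.sum) {t : ℕ}
    (hdrop : (l.drop t).sum ≤ (l'.drop t).sum) : (l'.take t).sum ≤ (l.take t).sum := by
  have := sum_take_add_sum_drop l t
  have := sum_take_add_sum_drop l' t
  omega

end List

section majorMotif

variable (n k lam : ℕ)

theorem majorMotif_take_of_le {t : ℕ} (ht : t ≤ (n - k) / (lam - 1)) :
    (majorMotif n k lam).take t = List.replicate t lam := by
  rw [majorMotif, List.take_append_of_le_length (by simpa using ht), List.take_replicate,
    min_eq_left ht]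

theorem headI_majorMotif (hβ : 1 ≤ (n - k) / (lam - 1)) : (majorMotif n k lam).headI = lam := by
  obtain ⟨b, hb⟩ : ∃ b, (n - k) / (lam - 1) = b + 1 := ⟨_, (Nat.sub_add_cancel hβ).symm⟩
  rw [majorMotif, hb, List.replicate_succ]
  rfl

theorem eq_one_of_mem_drop_majorMotif {t : ℕ} (ht : (n - k) / (lam - 1) < t) {x : ℕ}
    (hx : x ∈ (majorMotif n k lam).drop t) : x = 1 := by
  rw [majorMotif] at hx
  generalize (n - k) / (lam - 1) = β at ht hx
  obtain ⟨s, rfl⟩ : ∃ s, t = β + 1 + s := ⟨t - (β + 1), by omega⟩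
  rw [List.drop_append, List.drop_eq_nil_of_le (by simp; omega), List.nil_append,
    List.length_replicate, show β + 1 + s - β = s + 1 by omega, List.drop_succ_cons,
    List.drop_replicate] at hx
  exact List.eq_of_mem_replicate hx

theorem sum_drop_majorMotif_of_lt {t : ℕ} (ht : (n - k) / (lam - 1) < t) :
    ((majorMotif n k lam).drop t).sum = ((majorMotif n k lam).drop t).length := by
  rw [List.sum_eq_card_nsmul _ 1 fun x hx => eq_one_of_mem_drop_majorMotif n k lam ht hx,
    smul_eq_mul, mul_one]

end majorMotif

theorem strength_stmt_13_general {n k k' : ℕ} (h2 : k < k')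
    (p q : List ℕ) (hp : IsMotif n p) (hq : IsMotif n q)
    (hplen : p.length = k) (hpmaj : IsMajorMotif n k p)
    (hqlen : k' ≤ q.length) (hfirst : q.headI ≤ p.headI) :
    Dominates p q := by
  obtain ⟨-, -, hpsum⟩ := hp
  obtain ⟨hqs, hqpos, hqsum⟩ := hq
  obtain ⟨lam, -, -, -, rfl⟩ := hpmaj
  intro t ht _
  rcases le_or_gt t ((n - k) / (lam - 1)) with hβ | hβ
  · rw [majorMotif_take_of_le n k lam hβ, List.sum_replicate, smul_eq_mul]
    rw [headI_majorMotif n k lam (ht.trans hβ)] at hfirst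
    exact (List.sum_take_le_mul_headI hqs t).trans (Nat.mul_le_mul_left t hfirst)
  · refine List.sum_take_le_sum_take_of_sum_drop_le (hpsum.trans hqsum.symm) ?_
    rw [sum_drop_majorMotif_of_lt n k lam hβ]
    calc ((majorMotif n k lam).drop t).length ≤ (q.drop t).length := by
          simp only [List.length_drop]; omega
      _ ≤ (q.drop t).sum :=
          List.length_le_sum_of_one_le _ fun x hx => hqpos x (List.mem_of_mem_drop hx)

/-- for `1 ≤ k < k' ≤ n`, a major motif `p` of `n` with `k`
parts dominates every motif `q` of `n` with at least `k'` parts whose first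
entry is at most `p[1]`. -/
theorem strength_stmt_13 {n k k' : ℕ} (h1 : 1 ≤ k) (h2 : k < k') (h3 : k' ≤ n)
    (p q : List ℕ) (hp : IsMotif n p) (hq : IsMotif n q)
    (hplen : p.length = k) (hpmaj : IsMajorMotif n k p)
    (hqlen : k' ≤ q.length) (hfirst : q.headI ≤ p.headI) :
    Dominates p q :=
  strength_stmt_13_general h2 p q hp hq hplen hpmaj hqlen hfirst
end
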